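/- arXiv:2002.03926 — 2 statements merged into one kernel-verified Lean document; each statement's English description precedes it below -/
import Mathlib

section
/- Let X be a regular projective curve over a field k and D an ℝ-divisor on X with deg(D) > 0. Then sup_{s ∈ Γ(D)_ℚ^×} (s^{-1}) = D, i.e. for every closed point x, sup over s of ord_x(s^{-1}) equals ord_x(D). -/
open scoped BigOperators Classical

/-- An abstract package of the data attached to a regular projective curve `X` over a field
`k`: `F = Rat(X)` is the function field, `P = X^{(1)}` is the set of closed points,
`degp x = [k(x):k]`, `ord x f` is the order of vanishing of a nonzero rational function `f`
at `x`, `H0 D` is the Riemann–Roch space of an ℝ-divisor `D : P → ℝ` (a `k`-subspace of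
`F`), and `riemannRoch` is the Riemann–Roch estimate for integral divisors of large
degree. -/
structure CurveData (k F P : Type*) [Field k] [Field F] [Algebra k F] : Type _ where
  genus : ℕ
  degp : P → ℕ
  degp_pos : ∀ x, 0 < degp x
  ord : P → F → ℤ
  ord_mul : ∀ (x : P) {f g : F}, f ≠ 0 → g ≠ 0 → ord x (f * g) = ord x f + ord x g
  ord_support_finite : ∀ {f : F}, f ≠ 0 → (Function.support fun x => ord x f).Finite
  ord_deg_zero : ∀ {f : F}, f ≠ 0 → (∑ᶠ x, (ord x f : ℝ) * (degp x : ℝ)) = 0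
  finitely_generated : ∃ S : Finset F, IntermediateField.adjoin k (S : Set F) = ⊤
  H0 : (P → ℝ) → Submodule k F
  mem_H0 : ∀ (D : P → ℝ) (f : F), f ∈ H0 D ↔ (f ≠ 0 → ∀ x, 0 ≤ (ord x f : ℝ) + D x)
  H0_finite : ∀ D, Module.Finite k (H0 D)
  riemannRoch : ∀ D : P → ℝ, (Function.support D).Finite →
    (∀ x, ∃ n : ℤ, (n : ℝ) = D x) →
    2 * (genus : ℝ) - 2 < ∑ᶠ x, D x * (degp x : ℝ) →
    (Module.finrank k ↥(H0 D) : ℝ) = (∑ᶠ x, D x * (degp x : ℝ)) + 1 - genus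

variable {k F P : Type*} [Field k] [Field F] [Algebra k F]

/-- The degree of an ℝ-divisor `D`: `deg D = Σ_x D(x)·[k(x):k]`. -/
noncomputable def CurveData.degD (C : CurveData k F P) (D : P → ℝ) : ℝ :=
  ∑ᶠ x, D x * (C.degp x : ℝ)

/-- `E` is a principal ℝ-divisor, i.e. lies in the ℝ-linear span of the divisors of nonzero
rational functions (the image of `Rat(X)^×_ℝ → nDiv_ℝ(X)`). -/
def CurveData.IsPrincipalR (C : CurveData k F P) (E : P → ℝ) : Prop :=
  E ∈ Submodule.span ℝ {E' : P → ℝ | ∃ f : F, f ≠ 0 ∧ E' = fun x => (C.ord x f : ℝ)}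
/-! For large `n`, Riemann–Roch applied to the integral divisors `E = ⌊n D⌋` and `E - [x]`
(both of degree `> 2g - 2` because `deg D > 0`) shows `h⁰(E - [x]) < h⁰(E)`, so some
`f ∈ H⁰(E)` has a pole of order exactly `⌊n D(x)⌋` at `x`. Then `f ∈ Γ(n D)` and
`-ord_x(f) / n > D(x) - 2 / n`, while `-ord_x(f) / n ≤ D(x)` for every `f ∈ Γ(n D)`. -/

open Filter Function Module

theorem support_intFloor_subset {α : Type*} (D : α → ℝ) :
    support (fun y => (⌊D y⌋ : ℝ)) ⊆ support D :=
  fun y hy h => hy (by simp [h])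

namespace CurveData

variable (C : CurveData k F P)

theorem degD_eq_sum {D : P → ℝ} {T : Finset P} (hT : support D ⊆ T) :
    C.degD D = ∑ y ∈ T, D y * C.degp y :=
  finsum_eq_sum_of_support_subset _ ((support_mul_subset_left _ _).trans hT)

theorem degD_const_mul (D : P → ℝ) (c : ℝ) :
    C.degD (fun y => c * D y) = c * C.degD D := by
  simp only [degD, mul_assoc, mul_finsum]

theorem degD_sub_single {E : P → ℝ} (hE : (support E).Finite) (x : P) :
    C.degD (E - (Pi.single x 1 : P → ℝ)) = C.degD E - C.degp x := by
  have hsingle : ∑ᶠ y, (Pi.single x 1 : P → ℝ) y * C.degp y = C.degp x := by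
    rw [finsum_eq_single _ x fun y hy => by simp [hy]]
    simp
  simp only [degD, Pi.sub_apply, sub_mul]
  rw [finsum_sub_distrib, hsingle]
  · exact hE.subset (support_mul_subset_left _ _)
  · exact (Set.finite_singleton x).subset
      ((support_mul_subset_left _ _).trans Pi.support_single_subset)

theorem degD_sub_sum_le_degD_floor {D : P → ℝ} {T : Finset P} (hT : support D ⊆ T) :
    C.degD D - ∑ y ∈ T, (C.degp y : ℝ) ≤ C.degD (fun y => ⌊D y⌋) := by
  rw [C.degD_eq_sum hT, C.degD_eq_sum ((support_intFloor_subset D).trans hT),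
    ← Finset.sum_sub_distrib]
  refine Finset.sum_le_sum fun y _ => ?_
  rw [← sub_one_mul]
  exact mul_le_mul_of_nonneg_right (Int.sub_one_lt_floor _).le (Nat.cast_nonneg _)

theorem finrank_H0_sub_single_lt {E : P → ℝ} (hE : (support E).Finite)
    (hEint : ∀ y, ∃ n : ℤ, (n : ℝ) = E y) (x : P)
    (hdeg : 2 * (C.genus : ℝ) - 2 < C.degD E - C.degp x) :
    finrank k (C.H0 (E - (Pi.single x 1 : P → ℝ))) < finrank k (C.H0 E) := by
  have hE' : (support (E - (Pi.single x 1 : P → ℝ))).Finite :=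
    (hE.union (Set.finite_singleton x)).subset
      ((support_sub _ _).trans (Set.union_subset_union_right _ Pi.support_single_subset))
  have hE'int : ∀ y, ∃ n : ℤ, (n : ℝ) = (E - (Pi.single x 1 : P → ℝ)) y := fun y => by
    obtain ⟨n, hn⟩ := hEint y
    exact ⟨n - (Pi.single x 1 : P → ℤ) y, by simp [← hn, Pi.single_apply]⟩
  have hx : (0 : ℝ) < C.degp x := Nat.cast_pos.mpr (C.degp_pos x)
  have hRR := C.riemannRoch E hE hEint (by rw [← degD]; linarith)
  have hRR' := C.riemannRoch _ hE' hE'int (by rwa [← degD, C.degD_sub_single hE])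
  rw [← degD] at hRR
  rw [← degD, C.degD_sub_single hE] at hRR'
  have hlt : (finrank k (C.H0 (E - (Pi.single x 1 : P → ℝ))) : ℝ) < finrank k (C.H0 E) := by
    rw [hRR, hRR']
    linarith
  exact_mod_cast hlt

theorem exists_mem_H0_ord_add_lt_one {E : P → ℝ} (hE : (support E).Finite)
    (hEint : ∀ y, ∃ n : ℤ, (n : ℝ) = E y) (x : P)
    (hdeg : 2 * (C.genus : ℝ) - 2 < C.degD E - C.degp x) :
    ∃ f ∈ C.H0 E, f ≠ 0 ∧ (C.ord x f : ℝ) + E x < 1 := by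
  have := C.H0_finite (E - (Pi.single x 1 : P → ℝ))
  obtain ⟨f, hfE, hfE'⟩ := SetLike.not_le_iff_exists.mp fun hle =>
    (Submodule.finrank_mono hle).not_gt (C.finrank_H0_sub_single_lt hE hEint x hdeg)
  have hf : f ≠ 0 := by rintro rfl; exact hfE' (zero_mem _)
  refine ⟨f, hfE, hf, ?_⟩
  obtain ⟨y, hy⟩ : ∃ y, (C.ord y f : ℝ) + (E - (Pi.single x 1 : P → ℝ)) y < 0 := by
    by_contra! h
    exact hfE' ((C.mem_H0 _ f).mpr fun _ => h)
  obtain rfl : y = x := by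
    by_contra hyx
    have := (C.mem_H0 E f).mp hfE hf y
    rw [Pi.sub_apply, Pi.single_eq_of_ne hyx, sub_zero] at hy
    linarith
  rw [Pi.sub_apply, Pi.single_eq_same] at hy
  linarith

theorem eventually_exists_ord_gt {D : P → ℝ} (hD : (support D).Finite) (hdeg : 0 < C.degD D)
    (x : P) :
    ∀ᶠ n : ℕ in atTop, ∃ f : F, f ≠ 0 ∧ (∀ y, 0 ≤ (C.ord y f : ℝ) + n * D y) ∧
      n * D x - 2 < -(C.ord x f : ℝ) := by
  have hlarge : ∀ᶠ n : ℕ in atTop,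
      2 * (C.genus : ℝ) - 2 + ∑ y ∈ hD.toFinset, (C.degp y : ℝ) + C.degp x < n * C.degD D :=
    (tendsto_natCast_atTop_atTop.atTop_mul_const hdeg).eventually_gt_atTop _
  filter_upwards [hlarge] with n hn
  have hnD : support (fun y => (n : ℝ) * D y) ⊆ hD.toFinset :=
    (support_mul_subset_right _ _).trans (by simp)
  have hdegE : 2 * (C.genus : ℝ) - 2 < C.degD (fun y => ⌊(n : ℝ) * D y⌋) - C.degp x := by
    have := C.degD_sub_sum_le_degD_floor hnD
    rw [C.degD_const_mul] at this
    linarith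
  obtain ⟨f, hfE, hf, hfx⟩ := C.exists_mem_H0_ord_add_lt_one
    (hD.toFinset.finite_toSet.subset ((support_intFloor_subset _).trans hnD))
    (fun y => ⟨_, rfl⟩) x hdegE
  have hfE := (C.mem_H0 _ f).mp hfE hf
  refine ⟨f, hf, fun y => (hfE y).trans (by gcongr; exact Int.floor_le _), ?_⟩
  linarith [Int.sub_one_lt_floor ((n : ℝ) * D x)]

end CurveData

/-- Let `D` be an ℝ-divisor with `deg D > 0` on a regular projective
curve `X` over `k`. Then `sup_{s ∈ Γ(D)_ℚ^×} (s⁻¹) = D`: for every closed point `x`, the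
supremum over `s = f^{1/n} ∈ Γ(D)_ℚ^×` of `ord_x(s⁻¹) = −ord_x(f)/n` equals `ord_x(D)`. -/
theorem sSup_ord_inv_gammaQ_eq
    (C : CurveData k F P) (D : P → ℝ) (hD : (Function.support D).Finite)
    (hdeg : 0 < C.degD D) (x : P) :
    sSup {r : ℝ | ∃ (n : ℕ) (f : F), 0 < n ∧ f ≠ 0 ∧
        (∀ y, 0 ≤ (C.ord y f : ℝ) + (n : ℝ) * D y) ∧ r = -(C.ord x f : ℝ) / (n : ℝ)}
      = D x := by
  set S := {r : ℝ | ∃ (n : ℕ) (f : F), 0 < n ∧ f ≠ 0 ∧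
    (∀ y, 0 ≤ (C.ord y f : ℝ) + (n : ℝ) * D y) ∧ r = -(C.ord x f : ℝ) / (n : ℝ)}
  have hle : ∀ r ∈ S, r ≤ D x := by
    rintro r ⟨n, f, hn, -, hf, rfl⟩
    rw [div_le_iff₀ (Nat.cast_pos.mpr hn)]
    linarith [hf x]
  have hgt : ∀ w < D x, ∃ r ∈ S, w < r := by
    intro w hw
    have hε : 0 < 2 / (D x - w) := div_pos two_pos (sub_pos.mpr hw)
    obtain ⟨n, ⟨f, hf, hfD, hfx⟩, hn⟩ := ((C.eventually_exists_ord_gt hD hdeg x).and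
      (tendsto_natCast_atTop_atTop.eventually_gt_atTop (2 / (D x - w)))).exists
    have hn0 : (0 : ℝ) < n := hε.trans hn
    refine ⟨_, ⟨n, f, Nat.cast_pos.mp hn0, hf, hfD, rfl⟩, ?_⟩
    rw [div_lt_iff₀ (sub_pos.mpr hw)] at hn
    rw [lt_div_iff₀ hn0]
    linarith
  obtain ⟨r, hr, -⟩ := hgt (D x - 1) (by linarith)
  exact csSup_eq_of_forall_le_of_forall_lt_exists_gt ⟨r, hr⟩ hle hgt
end

section
/- Let (D,g) be a metrised ℝ-divisor on a regular projective curve X over a trivially valued field, with Γ(D)_ℚ^× ≠ ∅. Then λ_ess(D,g) = sup_{φ ∈ Γ(D)_ℚ^×} (−ln‖φ‖_g) = sup_{n≥1} (1/n) sup_{s ∈ H^0(nD)∖{0}} (−ln‖s‖_{ng}), i.e. the essential infimum computed over ℝ-sections equals the one computed over ℚ-sections. -/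
open scoped BigOperators Classical

variable {k F P : Type*} [Field k] [Field F] [Algebra k F]

open scoped BigOperators Classical

/-- A Green function on the tree `𝒯(X^{(1)})` of length 1 (the Berkovich analytification
of a curve over a trivially valued field), described through its restrictions to the
branches: `val x t` is the value at the point of `[η₀, x₀]` with parameter `t ∈ [0,∞)`,
`slope x = μ_x(g)` is the asymptotic slope along the branch of `x` (so the value at the
leaf `x₀` is `±∞` when `slope x ≠ 0`), and `root = g(η₀)`. Continuity on the tree amounts
to continuity along each branch, existence of the limit of `φ_g = g − slope·t` at each
leaf, finiteness of the support of the slopes, and the condition that for every `ε > 0`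
the bounded part `φ_g` stays `ε`-close to `g(η₀)` on all but finitely many branches. -/
structure GreenFunction (P : Type*) : Type _ where
  val : P → ℝ → ℝ
  slope : P → ℝ
  root : ℝ
  val_zero : ∀ x, val x 0 = root
  contOn : ∀ x, ContinuousOn (val x) (Set.Ici 0)
  slope_support_finite : (Function.support slope).Finite
  phi_tendsto : ∀ x, ∃ L : ℝ,
    Filter.Tendsto (fun t => val x t - slope x * t) Filter.atTop (nhds L)
  rootCont : ∀ ε > (0:ℝ), {x : P | ∃ t ≥ (0:ℝ), ε ≤ |val x t - slope x * t - root|}.Finite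

namespace GreenFunction

variable {P : Type*}

/-- Sum of two Green functions (corresponding to the sum of metrised ℝ-divisors). -/
noncomputable def add (g h : GreenFunction P) : GreenFunction P where
  val x t := g.val x t + h.val x t
  slope x := g.slope x + h.slope x
  root := g.root + h.root
  val_zero x := by simp [g.val_zero, h.val_zero]
  contOn x := (g.contOn x).add (h.contOn x)
  slope_support_finite :=
    (g.slope_support_finite.union h.slope_support_finite).subset
      (Function.support_add _ _)
  phi_tendsto x := by
    obtain ⟨L1, h1⟩ := g.phi_tendsto x
    obtain ⟨L2, h2⟩ := h.phi_tendsto x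
    refine ⟨L1 + L2, ?_⟩
    have h3 := h1.add h2
    convert h3 using 2 with t
    ring
  rootCont := by
    intro ε hε
    have h1 := g.rootCont (ε / 2) (by linarith)
    have h2 := h.rootCont (ε / 2) (by linarith)
    refine (h1.union h2).subset ?_
    intro x hx
    obtain ⟨t, ht, habs⟩ := hx
    by_contra hc
    simp only [Set.mem_union, Set.mem_setOf_eq, not_or, not_exists] at hc
    push_neg at hc
    obtain ⟨hc1, hc2⟩ := hc
    have e1 := hc1 t ht
    have e2 := hc2 t ht
    have tri : |(g.val x t + h.val x t) - (g.slope x + h.slope x) * t - (g.root + h.root)|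
        ≤ |g.val x t - g.slope x * t - g.root| + |h.val x t - h.slope x * t - h.root| := by
      have h4 := abs_add_le (g.val x t - g.slope x * t - g.root)
        (h.val x t - h.slope x * t - h.root)
      have h5 : (g.val x t + h.val x t) - (g.slope x + h.slope x) * t - (g.root + h.root)
          = (g.val x t - g.slope x * t - g.root) + (h.val x t - h.slope x * t - h.root) := by
        ring
      rw [h5]
      exact h4
    linarith

/-- Adding a real constant `c` to a Green function (i.e. `g + c`). -/
noncomputable def addConst (g : GreenFunction P) (c : ℝ) : GreenFunction P where
  val x t := g.val x t + c
  slope := g.slope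
  root := g.root + c
  val_zero x := by simp [g.val_zero]
  contOn x := (g.contOn x).add continuousOn_const
  slope_support_finite := g.slope_support_finite
  phi_tendsto x := by
    obtain ⟨L, hL⟩ := g.phi_tendsto x
    refine ⟨L + c, ?_⟩
    have h3 := hL.add (tendsto_const_nhds (x := c))
    convert h3 using 2 with t
    ring
  rootCont := by
    intro ε hε
    refine (g.rootCont ε hε).subset ?_
    rintro x ⟨t, ht, habs⟩
    refine ⟨t, ht, ?_⟩
    have : (fun (x : P) (t : ℝ) => g.val x t + c) x t - g.slope x * t - (g.root + c)
        = g.val x t - g.slope x * t - g.root := by ring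
    rwa [this] at habs

end GreenFunction

variable {k F P : Type*} [Field k] [Field F] [Algebra k F]

/-- The essential infimum `λ_ess(D,g)`: the supremum over `φ ∈ Γ(D)_ℝ^×` (represented by
the corresponding principal ℝ-divisors `E = (φ)` with `E + D ≥ 0`) of the infimum over the
Berkovich tree `X^an` of `g_{(φ)} + g` (on the branch of `x` at parameter `t`, this
function has value `E x · t + g(ξ_x(t))`). Here `D = g.slope`. -/
noncomputable def CurveData.lambdaEss (C : CurveData k F P) (g : GreenFunction P) : EReal :=
  ⨆ E ∈ {E : P → ℝ | C.IsPrincipalR E ∧ ∀ x, 0 ≤ E x + g.slope x},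
    ⨅ (x : P) (t : ℝ) (_ : 0 ≤ t), ((E x * t + g.val x t : ℝ) : EReal)

/-- `μ_{inf,x}(g) = inf_{ξ ∈ (η₀,x₀)} g(ξ)/t(ξ) ∈ ℝ ∪ {−∞}`, as an extended real. -/
noncomputable def GreenFunction.muInfX (g : GreenFunction P) (x : P) : EReal :=
  ⨅ (t : ℝ) (_ : 0 < t), ((g.val x t / t : ℝ) : EReal)

/-- Conversion `EReal → ℝ≥0∞` (positive part, sending `⊤` to `⊤`). -/
noncomputable def erealToENNReal (e : EReal) : ENNReal :=
  if e = ⊤ then ⊤ else ENNReal.ofReal e.toReal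

/-- The Arakelov degree of an ultrametrically normed finite-dimensional vector space over
a trivially valued field: minus the logarithm of the determinant norm of a basis wedge.
(Over a trivially valued field, for an ultrametric norm `N`, the determinant norm of a
generator of the determinant line is the infimum over bases of the product of the norms,
so `deghat = sup over bases of −Σ_i log N(bᵢ)`.) -/
noncomputable def deghat (k V : Type*) [Field k] [AddCommGroup V] [Module k V]
    (N : V → ℝ) : ℝ :=
  ⨆ b : Module.Basis (Fin (Module.finrank k V)) k V, -∑ i, Real.log (N (b i))

/-- The positive Arakelov degree: the supremum of the Arakelov degrees of all subspaces. -/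
noncomputable def deghatPlus (k V : Type*) [Field k] [AddCommGroup V] [Module k V]
    (N : V → ℝ) : ℝ :=
  ⨆ W : Submodule k V, deghat k W (fun w => N (w : V))

/-- The norm `‖f‖_{ng} = exp(−inf_{ξ∈X^an}(g_{(f)} + ng)(ξ))` on `H⁰(nD)`, for `f ≠ 0`. -/
noncomputable def CurveData.gnorm (C : CurveData k F P) (g : GreenFunction P) (n : ℕ)
    (f : F) : ℝ :=
  if f = 0 then 0
  else Real.exp (-sInf {r : ℝ | ∃ (x : P) (t : ℝ), 0 ≤ t ∧
    r = (C.ord x f : ℝ) * t + (n : ℝ) * g.val x t})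

/-- The `χ`-volume of a metrised ℝ-divisor `(D, g)` with `D = g.slope`:
`limsup_n 2·deghat(H⁰(nD), ‖·‖_{ng})/n²`. -/
noncomputable def CurveData.volChi (C : CurveData k F P) (g : GreenFunction P) : ℝ :=
  Filter.limsup (fun n : ℕ =>
    deghat k ↥(C.H0 fun x => (n : ℝ) * g.slope x) (fun f => C.gnorm g n (f : F))
      / ((n : ℝ) ^ 2 / 2)) Filter.atTop

/-- The arithmetic volume of a metrised ℝ-divisor `(D, g)` with `D = g.slope`:
`limsup_n 2·deghat₊(H⁰(nD), ‖·‖_{ng})/n²`. -/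
noncomputable def CurveData.volHat (C : CurveData k F P) (g : GreenFunction P) : ℝ :=
  Filter.limsup (fun n : ℕ =>
    deghatPlus k ↥(C.H0 fun x => (n : ℝ) * g.slope x) (fun f => C.gnorm g n (f : F))
      / ((n : ℝ) ^ 2 / 2)) Filter.atTop

/-- A metrised ℝ-divisor `(D,g)` (with `D = g.slope`) is big if `vol-hat(D,g) > 0`. -/
def CurveData.Big (C : CurveData k F P) (g : GreenFunction P) : Prop :=
  0 < C.volHat g

/-- A metrised ℝ-divisor is pseudo-effective if its sum with every big metrised ℝ-divisor
is big. -/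
def CurveData.PseudoEffective (C : CurveData k F P) (g : GreenFunction P) : Prop :=
  ∀ g₀ : GreenFunction P, C.Big g₀ → C.Big (g.add g₀)

/-!
An ℝ-section `φ = ∏ fᵢ^{aᵢ}` with `(φ) + D ≥ 0` is approximated by ℚ-sections `∏ fᵢ^{bᵢ}` with
the same property. At the finitely many points where some `fᵢ` has a zero or a pole, these
conditions cut out a polyhedron in exponent space with rational matrix `(ord_x fᵢ)`; it contains a
rational point because `Γ(D)_ℚ^× ≠ ∅`, hence its rational points are dense in it. On the branch of
`x`, `inf_t (e t + g)` is lower semicontinuous in the coefficient `e` among `e ≥ -D(x)`: far out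
the slope `e + D(x) > 0` dominates, and if `e + D(x) = 0` every admissible coefficient is at least
`e`. The formula through `H⁰(nD)` is the same supremum indexed by `φ = s^{1/n}`.
-/

open Module Submodule Matrix Set Filter Topology

section RationalPoints

variable {ι κ : Type*}

theorem finrank_le_finrank_of_algebraMap_comp_mem {K L : Type*} [Field K] [Field L] [Algebra K L]
    [Finite ι] {V : Submodule K (ι → K)} {W : Submodule L (ι → L)}
    (h : ∀ v ∈ V, algebraMap K L ∘ v ∈ W) : finrank K V ≤ finrank L W := by
  let b := Module.finBasis K V
  have hli : LinearIndependent L fun j => (⟨algebraMap K L ∘ (b j : ι → K), h _ (b j).2⟩ : W) :=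
    LinearIndependent.of_comp W.subtype <|
      linearIndependent_algebraMap_comp_iff.2 (b.linearIndependent.map' V.subtype V.ker_subtype)
  simpa using hli.fintype_card_le_finrank

theorem mem_closure_ratCast_of_mem_span {S : Submodule ℚ (κ → ℚ)} {v : κ → ℝ}
    (hv : v ∈ span ℝ ((Rat.cast ∘ ·) '' (S : Set (κ → ℚ)))) :
    v ∈ closure ((Rat.cast ∘ ·) '' (S : Set (κ → ℚ))) := by
  obtain ⟨n, c, s, rfl⟩ := mem_span_set'.1 hv
  choose q hqS hqs using fun i => (s i).2
  let Φ : (Fin n → ℝ) → κ → ℝ := fun c => ∑ i, c i • (s i : κ → ℝ)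
  have hΦ : Continuous Φ := by fun_prop
  have hdense : Dense (range fun r : Fin n → ℚ => (Rat.cast ∘ r : Fin n → ℝ)) :=
    DenseRange.piMap fun _ => Rat.denseRange_cast
  refine closure_mono ?_ (hΦ.range_subset_closure_image_dense hdense ⟨c, rfl⟩)
  rintro _ ⟨_, ⟨r, rfl⟩, rfl⟩
  refine ⟨∑ i, r i • q i, sum_mem fun i _ => S.smul_mem _ (hqS i), funext fun x => ?_⟩
  simp [Φ, ← hqs, Finset.sum_apply]

theorem Matrix.map_ratCast_mulVec [Fintype κ] (A : Matrix ι κ ℚ) (q : κ → ℚ) :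
    (A.map (↑) : Matrix ι κ ℝ) *ᵥ (Rat.cast ∘ q) = Rat.cast ∘ (A *ᵥ q) :=
  funext fun i => (RingHom.map_mulVec (Rat.castHom ℝ) A q i).symm

theorem Matrix.mem_closure_ratCast_ker [Finite ι] [Fintype κ] (A : Matrix ι κ ℚ) {v : κ → ℝ}
    (hv : (A.map (↑) : Matrix ι κ ℝ) *ᵥ v = 0) :
    v ∈ closure ((Rat.cast ∘ ·) '' {q : κ → ℚ | A *ᵥ q = 0}) := by
  -- The real span `W` of the rational kernel is the whole real kernel: rank-nullity on both
  -- sides, since neither the rank nor the dimension of the kernel drops under `ℚ → ℝ`.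
  set W := span ℝ (((Rat.cast : ℚ → ℝ) ∘ ·) '' (LinearMap.ker A.mulVecLin : Set (κ → ℚ)))
  have hW_le : W ≤ LinearMap.ker (A.map (↑) : Matrix ι κ ℝ).mulVecLin := by
    refine span_le.2 ?_
    rintro _ ⟨q, hq, rfl⟩
    simp_all [map_ratCast_mulVec]
  have hrange := finrank_le_finrank_of_algebraMap_comp_mem (K := ℚ) (L := ℝ)
    (V := LinearMap.range A.mulVecLin) (W := LinearMap.range (A.map (↑) : Matrix ι κ ℝ).mulVecLin)
    (by rintro _ ⟨q, rfl⟩; exact ⟨Rat.cast ∘ q, A.map_ratCast_mulVec q⟩)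
  have hker := finrank_le_finrank_of_algebraMap_comp_mem (ι := κ) (W := W)
    (fun q hq => subset_span ⟨q, hq, rfl⟩)
  have hQ := LinearMap.finrank_range_add_finrank_ker A.mulVecLin
  have hR := LinearMap.finrank_range_add_finrank_ker (A.map (↑) : Matrix ι κ ℝ).mulVecLin
  simp only [Module.finrank_fintype_fun_eq_card] at hQ hR
  have hW : W = LinearMap.ker (A.map (↑) : Matrix ι κ ℝ).mulVecLin :=
    eq_of_le_of_finrank_le hW_le (by omega)
  exact mem_closure_ratCast_of_mem_span (hW ▸ hv : v ∈ W)

theorem Matrix.add_smul_sub_mem_closure_ratCast_feasible [Finite ι] [Fintype κ]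
    (A : Matrix ι κ ℚ) (β : ι → ℝ) {a : κ → ℝ} {a₀ : κ → ℚ}
    (ha : β ≤ (A.map (↑) : Matrix ι κ ℝ) *ᵥ a)
    (ha₀ : β ≤ (A.map (↑) : Matrix ι κ ℝ) *ᵥ (Rat.cast ∘ a₀)) {s : ℚ} (hs₀ : 0 < s) (hs₁ : s < 1) :
    Rat.cast ∘ a₀ + (s : ℝ) • (a - Rat.cast ∘ a₀) ∈ closure ((Rat.cast ∘ ·) ''
      {q : κ → ℚ | β ≤ (A.map (↑) : Matrix ι κ ℝ) *ᵥ (Rat.cast ∘ q)}) := by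
  -- Strictly between `a₀` and `a`, a constraint is tight iff it is tight at both ends. The tight
  -- ones are rational linear equations in the direction `a - a₀`, solved densely by rational
  -- kernel vectors; the others are open conditions.
  set Aℝ : Matrix ι κ ℝ := A.map (↑)
  set T := {x | (Aℝ *ᵥ a) x = β x ∧ (Aℝ *ᵥ (Rat.cast ∘ a₀)) x = β x}
  have hker : ((A.submatrix ((↑) : T → ι) id).map (↑) : Matrix T κ ℝ) *ᵥ
      (a - Rat.cast ∘ a₀) = 0 := by
    ext x
    rw [← submatrix_map, mulVec_sub]
    exact sub_eq_zero.2 (x.2.1.trans x.2.2.symm)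
  let φ : (κ → ℝ) → κ → ℝ := fun z => Rat.cast ∘ a₀ + (s : ℝ) • z
  have hφ := image_closure_subset_closure_image (f := φ) (by fun_prop)
    ⟨_, Matrix.mem_closure_ratCast_ker _ hker, rfl⟩
  set U := ⋂ x ∈ Tᶜ, {z : κ → ℝ | β x < (Aℝ *ᵥ z) x}
  have hU : IsOpen U := (Set.toFinite Tᶜ).isOpen_biInter fun x _ =>
    isOpen_lt continuous_const (by fun_prop)
  have hpU : φ (a - Rat.cast ∘ a₀) ∈ U := by
    refine mem_iInter₂.2 fun x hx => ?_
    have hs₀' : (0 : ℝ) < s := by exact_mod_cast hs₀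
    have hs₁' : (s : ℝ) < 1 := by exact_mod_cast hs₁
    simp only [T, mem_compl_iff, mem_ofPred_eq, not_and_or] at hx
    simp only [φ, mem_ofPred_eq, mulVec_add, mulVec_smul, mulVec_sub, Pi.add_apply,
      Pi.smul_apply, Pi.sub_apply, smul_eq_mul]
    rcases hx with hx | hx
    · nlinarith [lt_of_le_of_ne (ha x) (Ne.symm hx), ha₀ x]
    · nlinarith [lt_of_le_of_ne (ha₀ x) (Ne.symm hx), ha x]
  refine closure_mono ?_ (hU.inter_closure ⟨hpU, hφ⟩)
  rintro _ ⟨hzU, _, ⟨q, hq, rfl⟩, rfl⟩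
  have hφq : φ (Rat.cast ∘ q) = Rat.cast ∘ (a₀ + s • q) := funext fun i => by simp [φ]
  rw [hφq] at hzU ⊢
  refine ⟨a₀ + s • q, fun x => ?_, rfl⟩
  by_cases hx : x ∈ T
  · have hqx : (A *ᵥ q) x = 0 := congrFun hq ⟨x, hx⟩
    have hx₀ := hx.2
    rw [map_ratCast_mulVec] at hx₀ ⊢
    simp_all [mulVec_add, mulVec_smul]
  · exact (mem_iInter₂.1 hzU x hx).le

theorem Matrix.mem_closure_ratCast_feasible [Finite ι] [Fintype κ] (A : Matrix ι κ ℚ)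
    (β : ι → ℝ) {a : κ → ℝ} {a₀ : κ → ℚ} (ha : β ≤ (A.map (↑) : Matrix ι κ ℝ) *ᵥ a)
    (ha₀ : β ≤ (A.map (↑) : Matrix ι κ ℝ) *ᵥ (Rat.cast ∘ a₀)) :
    a ∈ closure ((Rat.cast ∘ ·) ''
      {q : κ → ℚ | β ≤ (A.map (↑) : Matrix ι κ ℝ) *ᵥ (Rat.cast ∘ q)}) := by
  have hlim : Tendsto (fun n : ℕ => Rat.cast ∘ a₀ + ((n / (n + 1) : ℚ) : ℝ) • (a - Rat.cast ∘ a₀))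
      atTop (𝓝 a) := by
    have := ((tendsto_natCast_div_add_atTop (1 : ℝ)).smul_const (a - Rat.cast ∘ a₀)).const_add
      (Rat.cast ∘ a₀)
    simpa using this
  refine isClosed_closure.mem_of_tendsto hlim (eventually_atTop.2 ⟨1, fun n hn =>
    A.add_smul_sub_mem_closure_ratCast_feasible β ha ha₀ ?_ ?_⟩)
  · have : (0 : ℚ) < n := by exact_mod_cast hn
    positivity
  · rw [div_lt_one (by positivity)]
    linarith

end RationalPoints
theorem eventually_sub_le_mul_add {v : ℝ → ℝ} {d e r M ε : ℝ}
    (hM : ∀ t, 0 ≤ t → M ≤ v t - d * t) (he : 0 ≤ e + d)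
    (hr : ∀ t, 0 ≤ t → r ≤ e * t + v t) (hε : 0 < ε) :
    ∀ᶠ e' in 𝓝 e, 0 ≤ e' + d → ∀ t, 0 ≤ t → r - ε ≤ e' * t + v t := by
  rcases he.eq_or_lt with hc | hc
  · refine Eventually.of_forall fun e' he' t ht => ?_
    nlinarith [hr t ht]
  · -- beyond `T` the slack of the slope absorbs everything, before `T` closeness to `e` does
    set T := 2 * |r - M| / (e + d) + 1
    have hT : 0 < T := by positivity
    have hcT : r - M ≤ (e + d) / 2 * T := by
      have : (e + d) / 2 * T = |r - M| + (e + d) / 2 := by simp only [T]; field_simp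
      linarith [le_abs_self (r - M)]
    filter_upwards [Metric.ball_mem_nhds e (lt_min (half_pos hc) (div_pos hε hT))]
      with e' he' _ t ht
    rw [Metric.mem_ball, Real.dist_eq, lt_min_iff, abs_lt] at he'
    obtain ⟨⟨h₁, -⟩, h₂⟩ := he'
    rcases le_total t T with htT | htT
    · have : |e' - e| * t ≤ ε := by
        calc |e' - e| * t ≤ ε / T * T := by gcongr
          _ = ε := div_mul_cancel₀ ε hT.ne'
      nlinarith [hr t ht, neg_abs_le (e' - e)]
    · have : (e + d) / 2 * T ≤ (e' + d) * t := by nlinarith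
      nlinarith [hM t ht]

theorem GreenFunction.exists_le_val_sub_slope_mul (g : GreenFunction P) (x : P) :
    ∃ M : ℝ, ∀ t, 0 ≤ t → M ≤ g.val x t - g.slope x * t := by
  obtain ⟨L, hL⟩ := g.phi_tendsto x
  obtain ⟨T, hT⟩ := eventually_atTop.1 (hL.eventually (eventually_ge_nhds (sub_one_lt L)))
  have hcont : ContinuousOn (fun t => g.val x t - g.slope x * t) (Icc 0 (max T 0)) :=
    ((g.contOn x).mono Icc_subset_Ici_self).sub (by fun_prop)
  obtain ⟨t₀, -, hmin⟩ :=
    isCompact_Icc.exists_isMinOn (nonempty_Icc.2 (le_max_right T 0)) hcont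
  refine ⟨min (g.val x t₀ - g.slope x * t₀) (L - 1), fun t ht => ?_⟩
  rcases le_total t (max T 0) with h | h
  · exact (min_le_left _ _).trans (hmin ⟨ht, h⟩)
  · exact (min_le_right _ _).trans (hT t ((le_max_left _ _).trans h))

theorem GreenFunction.exists_ratCast_mulVec_approx {κ : Type*} [Fintype κ] (g : GreenFunction P)
    (A : Matrix P κ ℚ) (hA : {x | A x ≠ 0}.Finite) {a : κ → ℝ} {a₀ : κ → ℚ} {r ε : ℝ}
    (ha : ∀ x, 0 ≤ ((A.map (↑) : Matrix P κ ℝ) *ᵥ a) x + g.slope x)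
    (ha₀ : ∀ x, 0 ≤ ((A.map (↑) : Matrix P κ ℝ) *ᵥ (Rat.cast ∘ a₀)) x + g.slope x)
    (hr : ∀ x t, 0 ≤ t → r ≤ ((A.map (↑) : Matrix P κ ℝ) *ᵥ a) x * t + g.val x t)
    (hε : 0 < ε) :
    ∃ b : κ → ℚ, (∀ x, 0 ≤ ((A.map (↑) : Matrix P κ ℝ) *ᵥ (Rat.cast ∘ b)) x + g.slope x) ∧
      ∀ x t, 0 ≤ t →
        r - ε ≤ ((A.map (↑) : Matrix P κ ℝ) *ᵥ (Rat.cast ∘ b)) x * t + g.val x t := by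
  set S := {x | A x ≠ 0}
  have : Finite S := hA.to_subtype
  set Aℝ : Matrix P κ ℝ := A.map (↑)
  have hzero : ∀ x ∉ S, ∀ w, (Aℝ *ᵥ w) x = 0 := fun x hx w => by
    simp only [S, mem_ofPred_eq, not_not] at hx
    simp [Aℝ, mulVec, dotProduct, hx]
  have hclosure := (A.submatrix ((↑) : S → P) id).mem_closure_ratCast_feasible
    (fun x => -g.slope x) (fun x => (neg_le_iff_add_nonneg (a := g.slope x)).2 (ha x))
    (fun x => (neg_le_iff_add_nonneg (a := g.slope x)).2 (ha₀ x))
  have hev : ∀ᶠ w in 𝓝 a, ∀ x : S, 0 ≤ (Aℝ *ᵥ w) x + g.slope x →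
      ∀ t, 0 ≤ t → r - ε ≤ (Aℝ *ᵥ w) x * t + g.val x t := by
    refine eventually_all.2 fun x => ?_
    obtain ⟨M, hM⟩ := g.exists_le_val_sub_slope_mul x
    have hcont : Continuous fun w : κ → ℝ => (Aℝ *ᵥ w) x := by fun_prop
    exact hcont.tendsto a |>.eventually (eventually_sub_le_mul_add hM (ha x) (hr x) hε)
  obtain ⟨_, ⟨b, hb, rfl⟩, hbr⟩ :=
    ((mem_closure_iff_frequently.1 hclosure).and_eventually hev).exists
  refine ⟨b, fun x => ?_, fun x t ht => ?_⟩
  · by_cases hx : x ∈ S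
    · exact (neg_le_iff_add_nonneg (a := g.slope x)).1 (hb ⟨x, hx⟩)
    · simpa [hzero x hx] using ha x
  · by_cases hx : x ∈ S
    · exact hbr ⟨x, hx⟩ ((neg_le_iff_add_nonneg (a := g.slope x)).1 (hb ⟨x, hx⟩)) t ht
    · have := hr x t ht
      simp only [hzero x hx] at this ⊢
      linarith

/-- `−ln‖φ‖_g = inf_{X^an} (g_{(φ)} + g)` for an ℝ-section `φ` with divisor `E`. -/
noncomputable def GreenFunction.negLogNorm (g : GreenFunction P) (E : P → ℝ) : EReal :=
  ⨅ (x : P) (t : ℝ) (_ : 0 ≤ t), ((E x * t + g.val x t : ℝ) : EReal)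

theorem GreenFunction.coe_le_negLogNorm_iff (g : GreenFunction P) (E : P → ℝ) (r : ℝ) :
    (r : EReal) ≤ g.negLogNorm E ↔ ∀ x t, 0 ≤ t → r ≤ E x * t + g.val x t := by
  simp only [negLogNorm, le_iInf_iff, EReal.coe_le_coe_iff]

theorem GreenFunction.negLogNorm_div (g : GreenFunction P) (E : P → ℝ) {n : ℝ} (hn : n ≠ 0) :
    g.negLogNorm (fun x => E x / n) =
      ⨅ (x : P) (t : ℝ) (_ : 0 ≤ t), (((E x * t + n * g.val x t) / n : ℝ) : EReal) := by
  unfold negLogNorm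
  congr! 5
  field_simp

namespace CurveData

variable (C : CurveData k F P) (g : GreenFunction P)

theorem ord_zpow (x : P) {f : F} (hf : f ≠ 0) (n : ℤ) : C.ord x (f ^ n) = n * C.ord x f := by
  let φ : Fˣ →* Multiplicative ℤ := MonoidHom.mk' (fun u => .ofAdd (C.ord x u))
    fun u v => by simp [C.ord_mul x u.ne_zero v.ne_zero, ofAdd_add]
  simpa [φ] using congrArg Multiplicative.toAdd (map_zpow φ (Units.mk0 f hf) n)

theorem ord_one (x : P) : C.ord x 1 = 0 := by
  simpa using C.ord_zpow x one_ne_zero 0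

/-- The divisors of elements of `Rat(X)^×_ℚ`. -/
noncomputable def principalQ : Submodule ℚ (P → ℝ) :=
  span ℚ {E | ∃ f : F, f ≠ 0 ∧ E = fun x => (C.ord x f : ℝ)}

theorem mem_principalQ_iff {E : P → ℝ} :
    E ∈ C.principalQ ↔ ∃ (n : ℕ) (f : F), 0 < n ∧ f ≠ 0 ∧ ∀ x, (n : ℝ) * E x = C.ord x f := by
  refine ⟨fun hE => ?_, fun ⟨n, f, hn, hf, h⟩ => ?_⟩
  · induction hE using Submodule.span_induction with
    | mem E hE =>
      obtain ⟨f, hf, rfl⟩ := hE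
      exact ⟨1, f, one_pos, hf, by simp⟩
    | zero => exact ⟨1, 1, one_pos, one_ne_zero, fun x => by simp [C.ord_one]⟩
    | add E₁ E₂ _ _ h₁ h₂ =>
      obtain ⟨n₁, f₁, hn₁, hf₁, h₁⟩ := h₁
      obtain ⟨n₂, f₂, hn₂, hf₂, h₂⟩ := h₂
      refine ⟨n₁ * n₂, f₁ ^ (n₂ : ℤ) * f₂ ^ (n₁ : ℤ), by positivity,
        mul_ne_zero (zpow_ne_zero _ hf₁) (zpow_ne_zero _ hf₂), fun x => ?_⟩
      rw [C.ord_mul x (zpow_ne_zero _ hf₁) (zpow_ne_zero _ hf₂), C.ord_zpow x hf₁,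
        C.ord_zpow x hf₂]
      push_cast
      rw [← h₁ x, ← h₂ x, Pi.add_apply]
      ring
    | smul q E _ h =>
      obtain ⟨n, f, hn, hf, h⟩ := h
      refine ⟨q.den * n, f ^ q.num, by positivity, zpow_ne_zero _ hf, fun x => ?_⟩
      have hq : (q : ℝ) * q.den = q.num := by exact_mod_cast Rat.mul_den_eq_num q
      rw [C.ord_zpow x hf, Pi.smul_apply, Rat.smul_def]
      push_cast
      rw [← h x]
      linear_combination (n : ℝ) * E x * hq
  · have : E = (n : ℚ)⁻¹ • fun x => (C.ord x f : ℝ) := funext fun x => by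
      rw [Pi.smul_apply, Rat.smul_def, ← h x]
      push_cast
      field_simp
    exact this ▸ smul_mem _ _ (subset_span ⟨f, hf, rfl⟩)

theorem principalQ_le_isPrincipalR {E : P → ℝ} (hE : E ∈ C.principalQ) : C.IsPrincipalR E :=
  span_le_restrictScalars ℚ ℝ _ hE

def ordMatrix {κ : Type*} (f : κ → F) : Matrix P κ ℚ := fun x i => C.ord x (f i)

theorem ordMatrix_rows_finite {κ : Type*} [Finite κ] {f : κ → F} (hf : ∀ i, f i ≠ 0) :
    {x | C.ordMatrix f x ≠ 0}.Finite :=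
  (finite_iUnion fun i => C.ord_support_finite (hf i)).subset fun x hx => by
    obtain ⟨i, hi⟩ := Function.ne_iff.1 hx
    exact mem_iUnion.2 ⟨i, by simpa [ordMatrix] using hi⟩

theorem mulVec_ordMatrix_mem_principalQ {κ : Type*} [Fintype κ] {f : κ → F} (hf : ∀ i, f i ≠ 0)
    (q : κ → ℚ) : ((C.ordMatrix f).map (↑) : Matrix P κ ℝ) *ᵥ (Rat.cast ∘ q) ∈ C.principalQ := by
  have : ((C.ordMatrix f).map (↑) : Matrix P κ ℝ) *ᵥ (Rat.cast ∘ q) =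
      ∑ i, q i • fun x => (C.ord x (f i) : ℝ) :=
    funext fun x => by
      simp [ordMatrix, mulVec, dotProduct, Finset.sum_apply, Rat.smul_def, mul_comm]
  exact this ▸ sum_mem fun i _ => smul_mem _ _ (subset_span ⟨f i, hf i, rfl⟩)

theorem exists_ordMatrix_of_isPrincipalR {E : P → ℝ} (hE : C.IsPrincipalR E) :
    ∃ (m : ℕ) (f : Fin m → F) (c : Fin m → ℝ),
      (∀ i, f i ≠ 0) ∧ E = ((C.ordMatrix f).map (↑) : Matrix P (Fin m) ℝ) *ᵥ c := by
  obtain ⟨m, c, s, rfl⟩ := mem_span_set'.1 hE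
  choose f hf hfs using fun i => (s i).2
  exact ⟨m, f, c, hf, funext fun x => by
    simp [ordMatrix, mulVec, dotProduct, Finset.sum_apply, hfs, mul_comm]⟩

theorem exists_principalQ_approx {E E₀ : P → ℝ} (hE : C.IsPrincipalR E)
    (hED : ∀ x, 0 ≤ E x + g.slope x) (hE₀ : E₀ ∈ C.principalQ)
    (hE₀D : ∀ x, 0 ≤ E₀ x + g.slope x) {r ε : ℝ}
    (hr : ∀ x t, 0 ≤ t → r ≤ E x * t + g.val x t) (hε : 0 < ε) :
    ∃ E' ∈ C.principalQ, (∀ x, 0 ≤ E' x + g.slope x) ∧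
      ∀ x t, 0 ≤ t → r - ε ≤ E' x * t + g.val x t := by
  obtain ⟨m, f, c, hf, rfl⟩ := C.exists_ordMatrix_of_isPrincipalR hE
  obtain ⟨n₀, f₀, hn₀, hf₀, hE₀⟩ := C.mem_principalQ_iff.1 hE₀
  set f' : Fin (m + 1) → F := Fin.cons f₀ f
  have hf' : ∀ i, f' i ≠ 0 := Fin.cases hf₀ hf
  have hc : ((C.ordMatrix f).map (↑) : Matrix P (Fin m) ℝ) *ᵥ c =
      ((C.ordMatrix f').map (↑) : Matrix P (Fin (m + 1)) ℝ) *ᵥ Fin.cons 0 c :=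
    funext fun x => by simp [f', ordMatrix, mulVec, dotProduct, Fin.sum_univ_succ]
  have hc₀ : E₀ = ((C.ordMatrix f').map (↑) : Matrix P (Fin (m + 1)) ℝ) *ᵥ
      (Rat.cast ∘ Fin.cons (n₀ : ℚ)⁻¹ 0) := funext fun x => by
    have hn : (n₀ : ℝ) ≠ 0 := by positivity
    simp [f', ordMatrix, mulVec, dotProduct, Fin.sum_univ_succ]
    field_simp
    linarith [hE₀ x]
  rw [hc] at hED hr
  rw [hc₀] at hE₀D
  obtain ⟨b, hbD, hbr⟩ :=
    g.exists_ratCast_mulVec_approx _ (C.ordMatrix_rows_finite hf') hED hE₀D hr hε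
  exact ⟨_, C.mulVec_ordMatrix_mem_principalQ hf' b, hbD, hbr⟩

theorem ord_div_mem_principalQ {n : ℕ} (hn : 0 < n) {f : F} (hf : f ≠ 0) :
    (fun x => (C.ord x f : ℝ) / n) ∈ C.principalQ :=
  C.mem_principalQ_iff.2 ⟨n, f, hn, hf, fun x => by field_simp⟩

theorem ord_div_add_slope_nonneg {n : ℕ} (hn : 0 < n) {f : F}
    (hfD : ∀ x, 0 ≤ (C.ord x f : ℝ) + n * g.slope x) (x : P) :
    0 ≤ (C.ord x f : ℝ) / n + g.slope x := by
  rw [div_add' _ _ _ (by positivity), mul_comm]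
  exact div_nonneg (hfD x) n.cast_nonneg

theorem iSup_principalQ_le_lambdaEss :
    ⨆ E ∈ {E | E ∈ C.principalQ ∧ ∀ x, 0 ≤ E x + g.slope x}, g.negLogNorm E ≤ C.lambdaEss g :=
  biSup_mono fun _ hE => ⟨C.principalQ_le_isPrincipalR hE.1, hE.2⟩

theorem lambdaEss_le_iSup_principalQ {E₀ : P → ℝ} (hE₀ : E₀ ∈ C.principalQ)
    (hE₀D : ∀ x, 0 ≤ E₀ x + g.slope x) :
    C.lambdaEss g ≤ ⨆ E ∈ {E | E ∈ C.principalQ ∧ ∀ x, 0 ≤ E x + g.slope x}, g.negLogNorm E := by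
  refine iSup₂_le fun E ⟨hE, hED⟩ => le_of_forall_lt_imp_le_of_dense fun c hc => ?_
  obtain ⟨r₁, hcr₁, hr₁⟩ := EReal.exists_between_coe_real hc
  obtain ⟨r₂, hr₁₂, hr₂⟩ := EReal.exists_between_coe_real hr₁
  obtain ⟨E', hE'Q, hE'D, hE'r⟩ := C.exists_principalQ_approx g hE hED hE₀ hE₀D
    ((g.coe_le_negLogNorm_iff E r₂).1 hr₂.le) (sub_pos.2 (EReal.coe_lt_coe_iff.1 hr₁₂))
  calc c ≤ r₁ := hcr₁.le
    _ ≤ g.negLogNorm E' := (g.coe_le_negLogNorm_iff E' r₁).2 (by simpa using hE'r)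
    _ ≤ _ := le_iSup₂_of_le E' ⟨hE'Q, hE'D⟩ le_rfl

theorem iSup_principalQ_eq_iSup_H0 :
    ⨆ E ∈ {E | E ∈ C.principalQ ∧ ∀ x, 0 ≤ E x + g.slope x}, g.negLogNorm E =
      ⨆ (n : ℕ) (_ : 0 < n) (f : F) (_ : f ∈ C.H0 (fun x => (n : ℝ) * g.slope x)) (_ : f ≠ 0),
        ⨅ (x : P) (t : ℝ) (_ : 0 ≤ t),
          ((((C.ord x f : ℝ) * t + (n : ℝ) * g.val x t) / (n : ℝ) : ℝ) : EReal) := by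
  refine le_antisymm (iSup₂_le fun E ⟨hE, hED⟩ => ?_) (iSup_le fun n => iSup_le fun hn =>
    iSup_le fun f => iSup_le fun hH0 => iSup_le fun hf => ?_)
  · obtain ⟨n, f, hn, hf, hnE⟩ := C.mem_principalQ_iff.1 hE
    have hEf : E = fun x => (C.ord x f : ℝ) / n := funext fun x => by
      rw [← hnE]
      field_simp
    have hH0 : f ∈ C.H0 (fun x => (n : ℝ) * g.slope x) := (C.mem_H0 _ f).2 fun _ x => by
      rw [← hnE, ← mul_add]
      exact mul_nonneg n.cast_nonneg (hED x)
    refine le_iSup_of_le n <| le_iSup_of_le hn <| le_iSup_of_le f <| le_iSup_of_le hH0 <|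
      le_iSup_of_le hf ?_
    rw [hEf, g.negLogNorm_div _ (by positivity)]
  · rw [← g.negLogNorm_div _ (by positivity)]
    exact le_iSup₂_of_le _ ⟨C.ord_div_mem_principalQ hn hf,
      C.ord_div_add_slope_nonneg g hn ((C.mem_H0 _ f).1 hH0 hf)⟩ le_rfl

end CurveData

/-- Let `(D,g)` (with `D = g.slope`) be a metrised ℝ-divisor with
`Γ(D)_ℚ^× ≠ ∅`. Then the essential infimum `λ_ess(D,g)` computed over ℝ-sections equals the
one computed over ℚ-sections (elements `f^{1/n}` with `f ∈ F`, `n ≥ 1`), and also equals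
`sup_{n≥1} (1/n)·sup_{s ∈ H⁰(nD)∖{0}} (−ln‖s‖_{ng})`, where
`−ln‖s‖_{ng} = inf_{ξ∈X^an}(g_{(s)}+ng)(ξ)`. -/
theorem lambdaEss_eq_rational
    (C : CurveData k F P) (g : GreenFunction P)
    (hQ : ∃ (n : ℕ) (f : F), 0 < n ∧ f ≠ 0 ∧
      ∀ x, 0 ≤ (C.ord x f : ℝ) + (n : ℝ) * g.slope x) :
    C.lambdaEss g
      = (⨆ E ∈ {E : P → ℝ |
            (∃ (n : ℕ) (f : F), 0 < n ∧ f ≠ 0 ∧ ∀ x, (n : ℝ) * E x = (C.ord x f : ℝ)) ∧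
            ∀ x, 0 ≤ E x + g.slope x},
          ⨅ (x : P) (t : ℝ) (_ : 0 ≤ t), ((E x * t + g.val x t : ℝ) : EReal)) ∧
    C.lambdaEss g
      = ⨆ (n : ℕ) (_ : 0 < n) (f : F)
          (_ : f ∈ C.H0 (fun x => (n : ℝ) * g.slope x)) (_ : f ≠ 0),
          ⨅ (x : P) (t : ℝ) (_ : 0 ≤ t),
            ((((C.ord x f : ℝ) * t + (n : ℝ) * g.val x t) / (n : ℝ) : ℝ) : EReal) := by
  obtain ⟨n, f, hn, hf, hfD⟩ := hQ
  have h := le_antisymm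
    (C.lambdaEss_le_iSup_principalQ g (C.ord_div_mem_principalQ hn hf)
      (C.ord_div_add_slope_nonneg g hn hfD))
    (C.iSup_principalQ_le_lambdaEss g)
  refine ⟨?_, h.trans (C.iSup_principalQ_eq_iSup_H0 g)⟩
  simpa only [CurveData.mem_principalQ_iff, GreenFunction.negLogNorm] using h
end
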